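/- The sequence of eigenvalues produced by the fixed-point scheme is monotone non-increasing: if u_i with ‖u_i‖₂ = 1 attains λ_i(κ) = inf over {u ∈ H¹(𝒞), ‖u‖₂ = 1} of ∫|∇u|² − κ∫V_{i−1}|u|², and V_i := |u_i|^{p−2}/‖u_i‖ₚ^{p−2}, then λ_{i+1}(κ) ≤ λ_i(κ). -/

import Mathlib

open MeasureTheory Metric

noncomputable section

/-- The cylinder `𝒞 = ℝ × S^{d-1}`. -/
abbrev Cyl (d : ℕ) := ℝ × sphere (0 : EuclideanSpace ℝ (Fin d)) 1

/-- The uniform probability measure on the unit sphere `S^{d-1}`. -/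
noncomputable def sphProb (d : ℕ) : Measure (sphere (0 : EuclideanSpace ℝ (Fin d)) 1) :=
  ((volume : Measure (EuclideanSpace ℝ (Fin d))).toSphere Set.univ)⁻¹ •
    (volume : Measure (EuclideanSpace ℝ (Fin d))).toSphere

/-- The measure on the cylinder: Lebesgue measure times the uniform probability
measure on the sphere. -/
noncomputable def cylMeasure (d : ℕ) : Measure (Cyl d) :=
  (volume : Measure ℝ).prod (sphProb d)

/-- The lowest eigenvalue of the Schrödinger operator `-Δ - κV` on `H¹(𝒞)`:
`λ(V) = inf {∫|∇u|² - κ∫V|u|² : u ∈ H¹(𝒞), ‖u‖₂ = 1}`.  The Sobolev space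
`H¹(𝒞)` is represented by the set `H` of admissible functions together with the
Dirichlet energy `D u = ∫|∇u|²`. -/
def lamEig (d : ℕ) (κ : ℝ) (H : Set (Cyl d → ℝ)) (D : (Cyl d → ℝ) → ℝ)
    (V : Cyl d → ℝ) : ℝ :=
  sInf ((fun u => D u - κ * ∫ x, V x * (u x) ^ 2 ∂(cylMeasure d)) ''
    {u | u ∈ H ∧ (∫ x, (u x) ^ 2 ∂(cylMeasure d)) = 1})

/-!
The Rayleigh quotient of `u_i` for the new potential `V_i` is
`D u_i - κ ∫ V_i |u_i|² = D u_i - κ ‖u_i‖ₚ²`, and `‖u_i‖ₚ² = sup {∫ V |u_i|² : ‖V‖_q = 1}`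
dominates `∫ V_{i-1} |u_i|²` by Hölder's inequality for the conjugate exponents `p/2` and `q`.
Hence `λ(V_i) ≤ D u_i - κ ‖u_i‖ₚ² ≤ D u_i - κ ∫ V_{i-1} |u_i|² = λ(V_{i-1})`.
-/

lemma Real.holderConjugate_div_two_div_sub_two {p : ℝ} (hp : 2 < p) :
    (p / 2).HolderConjugate (p / (p - 2)) := by
  have hp2 : p - 2 ≠ 0 := by linarith
  rw [Real.holderConjugate_iff_eq_conjExponent (by linarith),
    show p / 2 - 1 = (p - 2) / 2 by ring]
  field_simp

namespace MeasureTheory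

variable {α : Type*} [MeasurableSpace α] {μ : Measure α}

lemma memLp_ofReal_of_integrable_rpow {g : α → ℝ} {q : ℝ} (hq : 0 < q) (hg : 0 ≤ g)
    (hgq : Integrable (fun x => g x ^ q) μ) : MemLp g (ENNReal.ofReal q) μ := by
  have hmeas : AEStronglyMeasurable g μ :=
    (hgq.aemeasurable.pow_const q⁻¹).aestronglyMeasurable.congr
      (.of_forall fun x => Real.rpow_rpow_inv (hg x) hq.ne')
  rw [← integrable_norm_rpow_iff hmeas (by simpa using hq) ENNReal.ofReal_ne_top]
  simpa [ENNReal.toReal_ofReal hq.le, Real.norm_of_nonneg (hg _)] using hgq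

lemma integral_mul_sq_le {p : ℝ} (hp : 2 < p) {V u : α → ℝ} (hV : 0 ≤ V)
    (hVq : Integrable (fun x => V x ^ (p / (p - 2))) μ)
    (hu : Integrable (fun x => |u x| ^ p) μ) :
    ∫ x, V x * u x ^ 2 ∂μ ≤
      (∫ x, |u x| ^ p ∂μ) ^ (2 / p) * (∫ x, V x ^ (p / (p - 2)) ∂μ) ^ (1 / (p / (p - 2))) := by
  have hsq : ∀ x, (u x ^ 2) ^ (p / 2) = |u x| ^ p := fun x => by
    rw [← sq_abs, ← Real.rpow_two, ← Real.rpow_mul (abs_nonneg _)]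
    congr 1
    field_simp
  have hu2 : MemLp (fun x => u x ^ 2) (ENNReal.ofReal (p / 2)) μ :=
    memLp_ofReal_of_integrable_rpow (by linarith) (fun x => sq_nonneg _)
      (hu.congr (.of_forall fun x => (hsq x).symm))
  have hV' : MemLp V (ENNReal.ofReal (p / (p - 2))) μ :=
    memLp_ofReal_of_integrable_rpow (div_pos (by linarith) (by linarith)) hV hVq
  calc ∫ x, V x * u x ^ 2 ∂μ = ∫ x, u x ^ 2 * V x ∂μ := by simp_rw [mul_comm]
    _ ≤ _ := integral_mul_le_Lp_mul_Lq_of_nonneg (Real.holderConjugate_div_two_div_sub_two hp)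
        (.of_forall fun x => sq_nonneg _) (.of_forall hV) hu2 hV'
    _ = _ := by simp only [hsq, one_div_div]

lemma integral_rpow_sub_two_div_mul_sq {p : ℝ} (hp : p ≠ 0) (u : α → ℝ) :
    ∫ x, |u x| ^ (p - 2) / ((∫ y, |u y| ^ p ∂μ) ^ (1 / p)) ^ (p - 2) * u x ^ 2 ∂μ =
      (∫ x, |u x| ^ p ∂μ) ^ (2 / p) := by
  have hI : 0 ≤ ∫ x, |u x| ^ p ∂μ := integral_nonneg fun _ => by positivity
  have hpow : ∀ x, |u x| ^ (p - 2) * u x ^ 2 = |u x| ^ p := fun x => by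
    rw [← sq_abs, ← Real.rpow_two, ← Real.rpow_add' (abs_nonneg _) (by simpa), sub_add_cancel]
  simp_rw [div_mul_eq_mul_div, hpow, integral_div, ← Real.rpow_mul hI]
  nth_rewrite 1 [← Real.rpow_one (∫ x, |u x| ^ p ∂μ)]
  have h2p : 1 - 1 / p * (p - 2) = 2 / p := by field_simp; ring
  rw [← Real.rpow_sub' hI (by rw [h2p]; positivity), h2p]

end MeasureTheory

lemma lamEig_le {d : ℕ} {κ : ℝ} {H : Set (Cyl d → ℝ)} {D : (Cyl d → ℝ) → ℝ} {V u : Cyl d → ℝ}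
    (hbdd : BddBelow ((fun u => D u - κ * ∫ x, V x * (u x) ^ 2 ∂(cylMeasure d)) ''
      {u | u ∈ H ∧ (∫ x, (u x) ^ 2 ∂(cylMeasure d)) = 1}))
    (hu : u ∈ H) (hu2 : ∫ x, (u x) ^ 2 ∂(cylMeasure d) = 1) :
    lamEig d κ H D V ≤ D u - κ * ∫ x, V x * (u x) ^ 2 ∂(cylMeasure d) :=
  csInf_le hbdd ⟨u, ⟨hu, hu2⟩, rfl⟩

theorem stmt7_general (d : ℕ) (p q κ : ℝ) (hp : 2 < p) (hq : q = p / (p - 2))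
    (hκ : 0 < κ) (H : Set (Cyl d → ℝ)) (D : (Cyl d → ℝ) → ℝ)
    (Vprev : Cyl d → ℝ) (hV0 : 0 ≤ Vprev)
    (hVq : Integrable (fun x => Vprev x ^ q) (cylMeasure d))
    (hVnorm : (∫ x, Vprev x ^ q ∂(cylMeasure d)) ^ (1 / q) = 1)
    (ui : Cyl d → ℝ) (hui : ui ∈ H)
    (hui2 : (∫ x, (ui x) ^ 2 ∂(cylMeasure d)) = 1)
    (huip : Integrable (fun x => |ui x| ^ p) (cylMeasure d))
    (hattain : D ui - κ * (∫ x, Vprev x * (ui x) ^ 2 ∂(cylMeasure d)) =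
      lamEig d κ H D Vprev)
    (hbdd : BddBelow ((fun u => D u -
        κ * ∫ x, (|ui x| ^ (p - 2) / ((∫ y, |ui y| ^ p ∂(cylMeasure d)) ^ (1 / p)) ^ (p - 2)) *
          (u x) ^ 2 ∂(cylMeasure d)) ''
      {u | u ∈ H ∧ (∫ x, (u x) ^ 2 ∂(cylMeasure d)) = 1})) :
    lamEig d κ H D
        (fun x => |ui x| ^ (p - 2) /
          ((∫ y, |ui y| ^ p ∂(cylMeasure d)) ^ (1 / p)) ^ (p - 2)) ≤
      lamEig d κ H D Vprev := by
  subst hq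
  have hHolder : ∫ x, Vprev x * ui x ^ 2 ∂(cylMeasure d) ≤
      (∫ x, |ui x| ^ p ∂(cylMeasure d)) ^ (2 / p) := by
    simpa only [hVnorm, mul_one] using integral_mul_sq_le hp hV0 hVq huip
  calc _ ≤ D ui - κ * (∫ x, |ui x| ^ p ∂(cylMeasure d)) ^ (2 / p) := by
        rw [← integral_rpow_sub_two_div_mul_sq (by positivity)]
        exact lamEig_le hbdd hui hui2
    _ ≤ D ui - κ * ∫ x, Vprev x * ui x ^ 2 ∂(cylMeasure d) := by gcongr
    _ = lamEig d κ H D Vprev := hattain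

/-- One step of the fixed-point scheme does not increase the eigenvalue: if
`u_i` with `‖u_i‖₂ = 1` attains `λ_i(κ) = λ(V_{i-1})`, and
`V_i = |u_i|^(p-2)/‖u_i‖ₚ^(p-2)`, then `λ_{i+1}(κ) = λ(V_i) ≤ λ(V_{i-1}) = λ_i(κ)`. -/
theorem stmt7 (d : ℕ) (hd : 2 ≤ d) (p q κ : ℝ) (hp : 2 < p) (hq : q = p / (p - 2))
    (hκ : 0 < κ) (H : Set (Cyl d → ℝ)) (D : (Cyl d → ℝ) → ℝ)
    (Vprev : Cyl d → ℝ) (hV0 : 0 ≤ Vprev)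
    (hVq : Integrable (fun x => Vprev x ^ q) (cylMeasure d))
    (hVnorm : (∫ x, Vprev x ^ q ∂(cylMeasure d)) ^ (1 / q) = 1)
    (ui : Cyl d → ℝ) (hui : ui ∈ H)
    (hui2 : (∫ x, (ui x) ^ 2 ∂(cylMeasure d)) = 1)
    (huip : Integrable (fun x => |ui x| ^ p) (cylMeasure d))
    (hppos : 0 < ∫ x, |ui x| ^ p ∂(cylMeasure d))
    (hVui : Integrable (fun x => Vprev x * (ui x) ^ 2) (cylMeasure d))
    (hattain : D ui - κ * (∫ x, Vprev x * (ui x) ^ 2 ∂(cylMeasure d)) =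
      lamEig d κ H D Vprev)
    (hbdd : BddBelow ((fun u => D u -
        κ * ∫ x, (|ui x| ^ (p - 2) / ((∫ y, |ui y| ^ p ∂(cylMeasure d)) ^ (1 / p)) ^ (p - 2)) *
          (u x) ^ 2 ∂(cylMeasure d)) ''
      {u | u ∈ H ∧ (∫ x, (u x) ^ 2 ∂(cylMeasure d)) = 1})) :
    lamEig d κ H D
        (fun x => |ui x| ^ (p - 2) /
          ((∫ y, |ui y| ^ p ∂(cylMeasure d)) ^ (1 / p)) ^ (p - 2)) ≤
      lamEig d κ H D Vprev :=
  stmt7_general d p q κ hp hq hκ H D Vprev hV0 hVq hVnorm ui hui hui2 huip hattain hbdd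

end
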